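/- For every integer n ≥ 2, λ_n = (s_0 s_1 ⋯ s_{n−1})^{n−1} in W̃_n, and this expression is reduced: the minimal number of simple reflections needed to write λ_n as a product of simple reflections is n(n−1). -/

import Mathlib

/-- The affine reflection `((i,j))` of the affine symmetric group `W̃ₙ`, as a function
`ℤ → ℤ`: it interchanges `i + k*n` and `j + k*n` for every `k ∈ ℤ` and fixes all
integers not congruent to `i` or `j` mod `n`. -/
def affRefl (n : ℕ) (i j : ℤ) : ℤ → ℤ := fun k =>
  if (k - i) % (n : ℤ) = 0 then k - i + j
  else if (k - j) % (n : ℤ) = 0 then k - j + i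
  else k

/-- `t : ℤ → ℤ` is an affine reflection of `W̃ₙ`. -/
def IsAffRefl (n : ℕ) (t : ℤ → ℤ) : Prop :=
  ∃ i j : ℤ, (i - j) % (n : ℤ) ≠ 0 ∧ t = affRefl n i j

/-- The simple reflection `sⱼ = ((j, j+1))`. -/
def simpleRefl (n : ℕ) (j : ℤ) : ℤ → ℤ := affRefl n j (j + 1)

/-- The translation `λₙ`: it sends `k ≡ 0 (mod n)` to `k - n(n-1)` and all other `k`
to `k + n`. -/
def lam (n : ℕ) : ℤ → ℤ := fun k =>
  if k % (n : ℤ) = 0 then k - (n : ℤ) * ((n : ℤ) - 1) else k + (n : ℤ)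

/-- The product `r₁ r₂ ⋯ rₘ` of a list of elements, with `(w·v)(k) = w(v(k))`. -/
def listProd (l : List (ℤ → ℤ)) : ℤ → ℤ := l.foldr (· ∘ ·) id

/-- `l` is a factorization of `λₙ` into affine reflections. -/
def IsFactorization (n : ℕ) (l : List (ℤ → ℤ)) : Prop :=
  (∀ t ∈ l, IsAffRefl n t) ∧ listProd l = lam n

/-- A tree-like factorization of `λₙ`: a factorization `[r₁, …, r_{2n-2}]` into `2n-2`
affine reflections such that there are integers `a₀, …, a_{2n-2}` and `b₁, …, b_{2n-2}`
with `r_k = ((a_{k-1}, b_k))`, `a_{k-1} < b_k` and `a_k ≡ b_k (mod n)`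
(0-based: `r` at index `k` equals `((a k, b (k+1)))`). -/
def IsTreeLike (n : ℕ) (l : List (ℤ → ℤ)) : Prop :=
  IsFactorization n l ∧ l.length = 2 * n - 2 ∧
  ∃ a b : ℕ → ℤ, ∀ k : ℕ, ∀ h : k < l.length,
    l.get ⟨k, h⟩ = affRefl n (a k) (b (k + 1)) ∧
    a k < b (k + 1) ∧ (a (k + 1) - b (k + 1)) % (n : ℤ) = 0

/-- `a₀ < a₁ < ⋯` is a strictly increasing endpoint sequence of the factorization `l`:
`r_ℓ = ((a_{ℓ-1}, a_ℓ))` (0-based: `r` at index `k` is `((a k, a (k+1)))`). -/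
def EndSeq (n : ℕ) (l : List (ℤ → ℤ)) (a : ℕ → ℤ) : Prop :=
  ∀ k : ℕ, ∀ h : k < l.length,
    a k < a (k + 1) ∧ l.get ⟨k, h⟩ = affRefl n (a k) (a (k + 1))

/-- The representative of `x` modulo `n` lying in `{1, …, n}`. -/
def resOne (n : ℕ) (x : ℤ) : ℤ := if x % (n : ℤ) = 0 then (n : ℤ) else x % (n : ℤ)

/-- `nb_k(r)` for the endpoint sequence `a` of a tree-like factorization of `λₙ`:
the list of the residues `a_i mod n` (representatives in `{1, …, n}`), in increasing
order of the index `i ∈ {1, …, 2n-2}`, over those `i` with `a_{i-1} ≡ k (mod n)`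
(0-based: indices `i < 2n-2` with `a i ≡ k`, recording the residue of `a (i+1)`). -/
def nb (n : ℕ) (a : ℕ → ℤ) (k : ℤ) : List ℤ :=
  ((List.range (2 * n - 2)).filter (fun i => decide ((a i - k) % (n : ℤ) = 0))).map
    (fun i => resOne n (a (i + 1)))

/-- A cyclic factorization of `λₙ`: a tree-like factorization such that, for an
endpoint sequence `a` as above, (i) `nb_n` is strictly increasing; and (ii) for each
`k ∈ {1, …, n-1}`, writing `nb_k = [c₁, …, c_ℓ]`, there is `j ∈ {1, …, ℓ}` with
`c_j < c_{j+1} < ⋯ < c_{ℓ-1} < k < c₁ < ⋯ < c_{j-1}`. -/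
def IsCyclicFact (n : ℕ) (l : List (ℤ → ℤ)) : Prop :=
  IsTreeLike n l ∧
  ∃ a : ℕ → ℤ, EndSeq n l a ∧
    List.Chain' (· < ·) (nb n a (n : ℤ)) ∧
    (∀ k : ℤ, 1 ≤ k → k ≤ (n : ℤ) - 1 →
      ∃ m : ℕ, m < (nb n a k).length ∧
        List.Chain' (· < ·)
          ((nb n a k).dropLast.drop m ++ k :: (nb n a k).dropLast.take m))

/-- The letter at (0-based) position `j` of the subword of `λ̂ₙ` with skip set `S`:
the identity `e` if `j` is a skip, and the simple reflection `sⱼ` otherwise. -/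
def letterAt (n : ℕ) (S : Finset ℕ) (j : ℕ) : ℤ → ℤ :=
  if j ∈ S then id else simpleRefl n (j : ℤ)

/-- The subword of the word `λ̂ₙ = [s₀, s₁, …, s_{n-1}]^{n-1}` (of length `N = n(n-1)`,
whose letter at 0-based position `j` is `s_j`) with skip set `S`. -/
def subword (n : ℕ) (S : Finset ℕ) : List (ℤ → ℤ) :=
  (List.range (n * (n - 1))).map (letterAt n S)

/-- `u_{(j)}`: the product of the first `j` letters of the subword. -/
def uPref (n : ℕ) (S : Finset ℕ) (j : ℕ) : ℤ → ℤ :=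
  listProd ((subword n S).take j)

/-- `u_{(j)}⁻¹`: since every letter is an involution, the inverse of `u_{(j)}` is the
product of the first `j` letters in reverse order. -/
def uPrefInv (n : ℕ) (S : Finset ℕ) (j : ℕ) : ℤ → ℤ :=
  listProd (((subword n S).take j).reverse)

/-- The element `t_{j+1} = u_{(j)} s_j u_{(j)}⁻¹` of `inv(u)` (0-based `j`). -/
def conjAt (n : ℕ) (S : Finset ℕ) (j : ℕ) : ℤ → ℤ :=
  uPref n S j ∘ simpleRefl n (j : ℤ) ∘ uPrefInv n S j

/-- The (0-based) skip indices of the subword, in increasing order. -/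
def skipIdx (S : Finset ℕ) : List ℕ := S.sort (· ≤ ·)

/-- The sequence `r^u` of skip reflections of the subword with skip set `S`. -/
def skipRefls (n : ℕ) (S : Finset ℕ) : List (ℤ → ℤ) :=
  (skipIdx S).map (conjAt n S)

/-- The subword with skip set `S` is a member of `S_n`: it is a subword of `λ̂ₙ`
with exactly `2n-2` skips whose product is the identity. -/
def SnMem (n : ℕ) (S : Finset ℕ) : Prop :=
  S ⊆ Finset.range (n * (n - 1)) ∧ S.card = 2 * n - 2 ∧ listProd (subword n S) = id

/-- The product of the suffix `r_{i+1} ⋯ r_m` (0-based: drops the first `i` factors). -/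
def suffixProd (l : List (ℤ → ℤ)) (i : ℕ) : ℤ → ℤ := listProd (l.drop i)

/-- The cyclic segment product `u_{a+1} u_{a+2} ⋯ u_{a+L}` of the subword with skip set
`S` (0-based starting position `a`, indices taken modulo `N = n(n-1)`). -/
def segProd (n : ℕ) (S : Finset ℕ) (a L : ℕ) : ℤ → ℤ :=
  listProd ((List.range L).map (fun t => letterAt n S ((a + t) % (n * (n - 1)))))

/-!
Let `c = s₀ s₁ ⋯ s_{n-1}`. On a period, `c` sends `0 ↦ -n`, `n - 1 ↦ n + 1` and `r ↦ r + 1`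
otherwise: it shifts multiples of `n` down by `n` and moves every other integer to the next
non-multiple of `n`. Hence `c^{n-1}` moves each non-multiple of `n` once around the `n - 1`
nonzero residues, i.e. up by `n`, and each multiple of `n` down by `n(n-1)`; this is `λₙ`.

For minimality, count the inversions `(p, q)`, `p < q`, `w q < w p`, with `1 ≤ p ≤ n` (and `q`
bounded). Left multiplication by `sⱼ` creates at most one new one, while `λₙ` has the `n(n-1)`
inversions `(i, k n)` with `1 ≤ i ≤ n - 1`, `1 ≤ k ≤ n`.
-/

open Function Finset

lemma listProd_append (l₁ l₂ : List (ℤ → ℤ)) :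
    listProd (l₁ ++ l₂) = listProd l₁ ∘ listProd l₂ := by
  induction l₁ with
  | nil => rfl
  | cons f l ih => exact congrArg (f ∘ ·) ih

lemma listProd_flatten_replicate (m : ℕ) (l : List (ℤ → ℤ)) :
    listProd (List.replicate m l).flatten = (listProd l)^[m] := by
  induction m with
  | zero => rfl
  | succ m ih =>
    rw [List.replicate_succ, List.flatten_cons, listProd_append, ih, iterate_succ']

lemma injective_listProd {l : List (ℤ → ℤ)} (h : ∀ f ∈ l, Injective f) :
    Injective (listProd l) := by
  induction l with
  | nil => exact injective_id
  | cons f l ih =>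
    exact (h f List.mem_cons_self).comp (ih fun g hg => h g (List.mem_cons_of_mem f hg))

lemma commute_listProd {l : List (ℤ → ℤ)} {g : ℤ → ℤ} (h : ∀ f ∈ l, Function.Commute f g) :
    Function.Commute (listProd l) g := by
  induction l with
  | nil => exact Function.Commute.id_left
  | cons f l ih =>
    exact (h f List.mem_cons_self).comp_left (ih fun f' hf => h f' (List.mem_cons_of_mem f hf))

lemma Function.Commute.apply_add_mul {w : ℤ → ℤ} {d : ℤ} (h : Function.Commute w (· + d))
    (k t : ℤ) : w (k + d * t) = w k + d * t := by
  induction t using Int.induction_on generalizing k with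
  | zero => simp
  | succ t ih => rw [mul_add_one, ← add_assoc, h.eq, ih, add_assoc]
  | pred t ih =>
    have := h.eq (k + d * (-t - 1))
    rw [show k + d * (-t - 1) + d = k + d * -t by ring, ih] at this
    linarith

lemma eq_of_commute_add_of_eqOn_Ico {d : ℤ} (hd : 0 < d) {v w : ℤ → ℤ}
    (hv : Function.Commute v (· + d)) (hw : Function.Commute w (· + d))
    (h : ∀ r, 0 ≤ r → r < d → v r = w r) : v = w := by
  funext k
  rw [← Int.emod_add_mul_ediv k d, hv.apply_add_mul, hw.apply_add_mul,
    h _ (Int.emod_nonneg k hd.ne') (Int.emod_lt_of_pos k hd)]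

lemma emod_sub_eq_zero_iff {a b d : ℤ} (ha : 0 ≤ a) (had : a < d) (hb : 0 ≤ b) (hbd : b < d) :
    (a - b) % d = 0 ↔ a = b := by
  rw [← Int.emod_eq_emod_iff_emod_sub_eq_zero, Int.emod_eq_of_lt ha had, Int.emod_eq_of_lt hb hbd]

lemma commute_affRefl_add (n : ℕ) (i j : ℤ) : Function.Commute (affRefl n i j) (· + (n : ℤ)) := by
  intro k
  simp only [affRefl, show k + n - i = k - i + n by ring, show k + n - j = k - j + n by ring,
    Int.add_emod_right]
  split_ifs <;> ring

lemma affRefl_involutive {n : ℕ} {i j : ℤ} (hij : ¬ (n : ℤ) ∣ i - j) :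
    Involutive (affRefl n i j) := by
  intro k
  simp only [affRefl, ← Int.dvd_iff_emod_eq_zero]
  by_cases hi : (n : ℤ) ∣ k - i
  · have : ¬ (n : ℤ) ∣ k - i + j - i := fun h => hij (by
      rw [show i - j = k - i - (k - i + j - i) by ring]; exact dvd_sub hi h)
    simp [hi, this]
  · by_cases hj : (n : ℤ) ∣ k - j <;> simp [hi, hj]

lemma commute_simpleRefl_add (n : ℕ) (j : ℤ) : Function.Commute (simpleRefl n j) (· + (n : ℤ)) :=
  commute_affRefl_add n j (j + 1)

lemma simpleRefl_involutive {n : ℕ} (hn : 2 ≤ n) (j : ℤ) : Involutive (simpleRefl n j) := by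
  refine affRefl_involutive fun h => ?_
  have h1 : (n : ℤ) ∣ 1 := by simpa using h
  have := Int.le_of_dvd one_pos h1
  omega

lemma simpleRefl_apply_cases (n : ℕ) (j x : ℤ) :
    (simpleRefl n j x = x + 1 ∧ (n : ℤ) ∣ x - j) ∨ simpleRefl n j x = x - 1 ∨
      simpleRefl n j x = x := by
  simp only [simpleRefl, affRefl, ← Int.dvd_iff_emod_eq_zero]
  split_ifs with h1 h2
  · exact Or.inl ⟨by ring, h1⟩
  · exact Or.inr (Or.inl (by ring))
  · exact Or.inr (Or.inr rfl)

lemma eq_add_one_and_dvd_of_simpleRefl_lt_simpleRefl {n : ℕ} {j x y : ℤ} (hxy : x < y)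
    (h : simpleRefl n j y < simpleRefl n j x) : y = x + 1 ∧ (n : ℤ) ∣ x - j := by
  rcases simpleRefl_apply_cases n j x with ⟨hx, hdvd⟩ | hx | hx <;>
    rcases simpleRefl_apply_cases n j y with ⟨hy, -⟩ | hy | hy
  all_goals first | exact ⟨by omega, hdvd⟩ | omega

lemma simpleRefl_apply_of_lt {n : ℕ} {j r : ℤ} (hj : 0 ≤ j) (hjn : j + 1 < n)
    (hr : 0 ≤ r) (hrn : r < n) :
    simpleRefl n j r = if r = j then j + 1 else if r = j + 1 then j else r := by
  simp only [simpleRefl, affRefl, emod_sub_eq_zero_iff hr hrn hj (by omega),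
    emod_sub_eq_zero_iff hr hrn (by omega) hjn]
  split_ifs <;> omega

lemma simpleRefl_sub_one_apply {n : ℕ} {r : ℤ} (hr : 0 ≤ r) (hrn : r < n) :
    simpleRefl n ((n : ℤ) - 1) r = if r = n - 1 then (n : ℤ) else if r = 0 then -1 else r := by
  simp only [simpleRefl, affRefl, sub_add_cancel,
    emod_sub_eq_zero_iff (b := (n : ℤ) - 1) hr hrn (by omega) (by omega), Int.sub_emod_right,
    Int.emod_eq_of_lt hr hrn]
  split_ifs <;> omega

/-- For `m = n`, the Coxeter element `c = s₀ s₁ ⋯ s_{n-1}`. -/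
def coxeterPrefix (n m : ℕ) : ℤ → ℤ :=
  listProd ((List.range m).map fun j : ℕ => simpleRefl n j)

lemma coxeterPrefix_succ (n m : ℕ) :
    coxeterPrefix n (m + 1) = coxeterPrefix n m ∘ simpleRefl n m := by
  rw [coxeterPrefix, List.range_succ, List.map_append, listProd_append]
  rfl

lemma commute_coxeterPrefix_add (n m : ℕ) :
    Function.Commute (coxeterPrefix n m) (· + (n : ℤ)) :=
  commute_listProd fun _ hf => by
    obtain ⟨j, -, rfl⟩ := List.mem_map.mp hf
    exact commute_simpleRefl_add n j

lemma coxeterPrefix_apply_of_lt {n m : ℕ} (hm : m < n) {r : ℤ} (hr : 0 ≤ r) (hrn : r < n) :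
    coxeterPrefix n m r = if r = m then 0 else if r < m then r + 1 else r := by
  induction m generalizing r with
  | zero =>
    change r = _
    split_ifs <;> omega
  | succ m ih =>
    rw [coxeterPrefix_succ, comp_apply, simpleRefl_apply_of_lt (by omega) (by omega) hr hrn]
    push_cast
    split_ifs <;> rw [ih (by omega) (by omega) (by omega)] <;> split_ifs <;> omega

lemma commute_lam_add (n : ℕ) : Function.Commute (lam n) (· + (n : ℤ)) := by
  intro k
  simp only [lam, Int.add_emod_right]
  split_ifs <;> ring

lemma coxeterPrefix_pred_apply {n : ℕ} (hn : 2 ≤ n) {r : ℤ} (hr : 0 ≤ r) (hrn : r < n) :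
    coxeterPrefix n (n - 1) r = if r = n - 1 then 0 else r + 1 := by
  rw [coxeterPrefix_apply_of_lt (by omega) hr hrn, Nat.cast_pred (by omega)]
  split_ifs <;> omega

lemma coxeterPrefix_self_eq {n : ℕ} (hn : 2 ≤ n) :
    coxeterPrefix n n = coxeterPrefix n (n - 1) ∘ simpleRefl n ((n : ℤ) - 1) := by
  have := coxeterPrefix_succ n (n - 1)
  rwa [Nat.sub_add_cancel (by omega), Nat.cast_pred (by omega)] at this

lemma coxeterPrefix_self_zero {n : ℕ} (hn : 2 ≤ n) : coxeterPrefix n n 0 = -n := by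
  have := commute_coxeterPrefix_add n (n - 1) (-1)
  simp only [neg_add_eq_sub] at this
  rw [coxeterPrefix_pred_apply hn (by omega) (by omega), if_pos rfl] at this
  rw [coxeterPrefix_self_eq hn, comp_apply, simpleRefl_sub_one_apply le_rfl (by omega),
    if_neg (by omega), if_pos rfl]
  omega

lemma coxeterPrefix_self_sub_one {n : ℕ} (hn : 2 ≤ n) : coxeterPrefix n n (n - 1) = n + 1 := by
  have := commute_coxeterPrefix_add n (n - 1) 0
  simp only [zero_add] at this
  rw [coxeterPrefix_self_eq hn, comp_apply, simpleRefl_sub_one_apply (by omega) (by omega),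
    if_pos rfl, this, coxeterPrefix_pred_apply hn le_rfl (by omega), if_neg (by omega)]
  ring

lemma coxeterPrefix_self_apply_of_pos_of_lt {n : ℕ} (hn : 2 ≤ n) {r : ℤ} (hr : 0 < r)
    (hrn : r < n - 1) : coxeterPrefix n n r = r + 1 := by
  rw [coxeterPrefix_self_eq hn, comp_apply, simpleRefl_sub_one_apply (by omega) (by omega),
    if_neg (by omega), if_neg (by omega), coxeterPrefix_pred_apply hn (by omega) (by omega),
    if_neg (by omega)]

lemma coxeterPrefix_self_iterate_mul {n : ℕ} (hn : 2 ≤ n) (t : ℕ) (k : ℤ) :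
    (coxeterPrefix n n)^[t] (n * k) = n * (k - t) := by
  induction t with
  | zero => simp
  | succ t ih =>
    rw [iterate_succ_apply', ih, ← zero_add (n * (k - t)),
      (commute_coxeterPrefix_add n n).apply_add_mul, coxeterPrefix_self_zero hn]
    push_cast
    ring

lemma coxeterPrefix_self_iterate_apply {n : ℕ} (hn : 2 ≤ n) {t : ℕ} (ht : t < n) {r : ℤ}
    (hr : 0 < r) (hrn : r < n) :
    (coxeterPrefix n n)^[t] r = if r + t < n then r + t else r + t + 1 := by
  induction t with
  | zero => simp [hrn]
  | succ t ih =>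
    rw [iterate_succ_apply', ih (by omega)]
    push_cast
    split_ifs with h₁ h₂ h₂
    · rw [coxeterPrefix_self_apply_of_pos_of_lt hn (by omega) (by omega), add_assoc]
    · rw [show r + t = n - 1 by omega, coxeterPrefix_self_sub_one hn]
      omega
    · omega
    · rw [show r + t + 1 = r + t + 1 - n + n * 1 by ring,
        (commute_coxeterPrefix_add n n).apply_add_mul,
        coxeterPrefix_self_apply_of_pos_of_lt hn (by omega) (by omega)]
      ring

lemma coxeterPrefix_self_iterate_eq_lam {n : ℕ} (hn : 2 ≤ n) :
    (coxeterPrefix n n)^[n - 1] = lam n := by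
  refine eq_of_commute_add_of_eqOn_Ico (by omega)
    ((commute_coxeterPrefix_add n n).iterate_left _) (commute_lam_add n) fun r hr hrn => ?_
  rw [lam, Int.emod_eq_of_lt hr hrn]
  rcases hr.eq_or_lt with rfl | hr
  · have := coxeterPrefix_self_iterate_mul hn (n - 1) 0
    rw [mul_zero, Nat.cast_pred (by omega)] at this
    rw [this, if_pos rfl]
    ring
  · rw [coxeterPrefix_self_iterate_apply hn (by omega) hr hrn, Nat.cast_pred (by omega),
      if_neg (by omega), if_neg (by omega)]
    ring

noncomputable def boxInversions (n : ℕ) (B : ℤ) (w : ℤ → ℤ) : Finset (ℤ × ℤ) :=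
  (Icc 1 (n : ℤ) ×ˢ Icc 1 B).filter fun p => p.1 < p.2 ∧ w p.2 < w p.1

lemma eq_of_dvd_apply_sub_apply {n : ℕ} {w : ℤ → ℤ} (hinj : Injective w)
    (hw : Function.Commute w (· + (n : ℤ))) {p q : ℤ} (hp : p ∈ Icc 1 (n : ℤ))
    (hq : q ∈ Icc 1 (n : ℤ)) (h : (n : ℤ) ∣ w p - w q) : p = q := by
  obtain ⟨t, ht⟩ := h
  have hpq : p = q + n * t := hinj (by rw [hw.apply_add_mul]; linarith)
  rw [mem_Icc] at hp hq
  have hdvd : (n : ℤ) ∣ q - p := ⟨-t, by rw [hpq]; ring⟩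
  have : q - p = 0 := Int.eq_zero_of_abs_lt_dvd hdvd (abs_lt.mpr ⟨by omega, by omega⟩)
  omega

/-- A simple reflection `sⱼ` only reverses pairs of adjacent values `x, x + 1` with `x ≡ j`, and
within one period there is only one `p` with `w p ≡ j`. -/
lemma card_boxInversions_simpleRefl_comp_le {n : ℕ} (B j : ℤ) {w : ℤ → ℤ} (hinj : Injective w)
    (hw : Function.Commute w (· + (n : ℤ))) :
    #(boxInversions n B (simpleRefl n j ∘ w)) ≤ #(boxInversions n B w) + 1 := by
  have hnew : ∀ p ∈ boxInversions n B (simpleRefl n j ∘ w) \ boxInversions n B w,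
      p.1 ∈ Icc 1 (n : ℤ) ∧ w p.2 = w p.1 + 1 ∧ (n : ℤ) ∣ w p.1 - j := by
    intro p hp
    simp only [boxInversions, mem_sdiff, mem_filter, mem_product, comp_apply] at hp
    obtain ⟨⟨⟨hp₁, hp₂⟩, hlt, hinv⟩, hnot⟩ := hp
    have hw_lt : w p.1 < w p.2 :=
      lt_of_le_of_ne (not_lt.mp fun h => hnot ⟨⟨hp₁, hp₂⟩, hlt, h⟩) (hinj.ne hlt.ne)
    exact ⟨hp₁, eq_add_one_and_dvd_of_simpleRefl_lt_simpleRefl hw_lt hinv⟩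
  have hone : #(boxInversions n B (simpleRefl n j ∘ w) \ boxInversions n B w) ≤ 1 := by
    refine card_le_one.mpr fun p hp q hq => ?_
    obtain ⟨hp₁, hp₂, hpj⟩ := hnew p hp
    obtain ⟨hq₁, hq₂, hqj⟩ := hnew q hq
    have h₁ : p.1 = q.1 :=
      eq_of_dvd_apply_sub_apply hinj hw hp₁ hq₁ (by simpa using dvd_sub hpj hqj)
    exact Prod.ext h₁ (hinj (by rw [hp₂, hq₂, h₁]))
  have := card_le_card_sdiff_add_card (s := boxInversions n B (simpleRefl n j ∘ w))
    (t := boxInversions n B w)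
  omega

lemma card_boxInversions_le_length {n : ℕ} (hn : 2 ≤ n) (B : ℤ) (w : List ℤ) :
    #(boxInversions n B (listProd (w.map (simpleRefl n)))) ≤ w.length := by
  induction w with
  | nil =>
    rw [List.length_nil, Nat.le_zero, card_eq_zero, boxInversions, filter_eq_empty_iff]
    intro p _ h
    exact absurd (h.1.trans h.2) (lt_irrefl _)
  | cons j w ih =>
    have hmem : ∀ f ∈ w.map (simpleRefl n), Injective f ∧ Function.Commute f (· + (n : ℤ)) := by
      intro f hf
      obtain ⟨i, -, rfl⟩ := List.mem_map.mp hf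
      exact ⟨(simpleRefl_involutive hn i).injective, commute_simpleRefl_add n i⟩
    have := card_boxInversions_simpleRefl_comp_le B j
      (injective_listProd fun f hf => (hmem f hf).1) (commute_listProd fun f hf => (hmem f hf).2)
    rw [List.length_cons]
    exact this.trans (by omega)

lemma le_card_boxInversions_lam {n : ℕ} (hn : 2 ≤ n) :
    n * (n - 1) ≤ #(boxInversions n (n * n) (lam n)) := by
  have hmaps : ∀ p ∈ Icc 1 ((n : ℤ) - 1) ×ˢ Icc 1 (n : ℤ),
      (p.1, p.2 * n) ∈ boxInversions n (n * n) (lam n) := by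
    intro p hp
    simp only [mem_product, mem_Icc] at hp
    obtain ⟨⟨hi₁, hi₂⟩, hj₁, hj₂⟩ := hp
    have hlam_i : lam n p.1 = p.1 + n := by
      rw [lam, Int.emod_eq_of_lt (by omega) (by omega), if_neg (by omega)]
    have hlam_j : lam n (p.2 * n) = p.2 * n - n * (n - 1) := by
      rw [lam, Int.mul_emod_left, if_pos rfl]
    simp only [boxInversions, mem_filter, mem_product, mem_Icc, hlam_i, hlam_j]
    refine ⟨⟨⟨hi₁, by omega⟩, ?_, ?_⟩, ?_, ?_⟩ <;> nlinarith
  have hinj : Set.InjOn (fun p : ℤ × ℤ => (p.1, p.2 * n))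
      ↑(Icc 1 ((n : ℤ) - 1) ×ˢ Icc 1 (n : ℤ)) :=
    fun p _ q _ h => by
      simp only [Prod.mk.injEq] at h
      exact Prod.ext h.1 (mul_right_cancel₀ (by omega) h.2)
  have hcard : #(Icc 1 ((n : ℤ) - 1) ×ˢ Icc 1 (n : ℤ)) = n * (n - 1) := by
    rw [card_product, Int.card_Icc, Int.card_Icc, mul_comm,
      show ((n : ℤ) - 1 + 1 - 1).toNat = n - 1 by omega,
      show ((n : ℤ) + 1 - 1).toNat = n by omega]
  exact hcard ▸ card_le_card_of_injOn _ hmaps hinj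

/-- `λₙ = (s₀ s₁ ⋯ s_{n-1})^{n-1}`, and this expression is reduced: the
minimal number of simple reflections needed to write `λₙ` is `n(n-1)`. -/
theorem stmt1 (n : ℕ) (hn : 2 ≤ n) :
    (listProd ((List.range n).map (fun j => simpleRefl n (j : ℤ))))^[n - 1] = lam n ∧
    (∃ w : List ℤ, w.length = n * (n - 1) ∧ listProd (w.map (simpleRefl n)) = lam n) ∧
    (∀ w : List ℤ, listProd (w.map (simpleRefl n)) = lam n → n * (n - 1) ≤ w.length) := by
  -- `(j : ℤ)` makes Lean coerce the list `List.range n` itself to `List ℤ`, through `List.bind`.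
  have hc : listProd ((List.range n).map (fun j => simpleRefl n (j : ℤ))) = coxeterPrefix n n := by
    simp only [List.pure_def, List.bind_eq_flatMap, ← List.map_eq_flatMap, List.map_map]
    rfl
  refine ⟨hc ▸ coxeterPrefix_self_iterate_eq_lam hn,
    ⟨(List.replicate (n - 1) (List.range n : List ℤ)).flatten, ?_, ?_⟩, fun w hw => ?_⟩
  · simp [List.length_flatten, mul_comm]
  · rw [List.map_flatten, List.map_replicate, listProd_flatten_replicate, hc,
      coxeterPrefix_self_iterate_eq_lam hn]
  · exact (le_card_boxInversions_lam hn).trans (hw ▸ card_boxInversions_le_length hn _ w)
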